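/- There exists a small constant D > 0 with the following property. Let b₁ = b_{φ₁}, b₂ = b_{φ₂} be rotations in SO(2)/{±I} and x₁, x₂ ∈ [−2, 2]. If 0 < δ < D and the distance from n(−x₁)·b₁^{−1}·b₂·n(x₂) to the group M·A (diagonal subgroup of SL(2,ℂ) times positive diagonal) is at most δ, then the angular distance between b₁ and b₂ is O(δ) and |x₁ − x₂| = O(δ); the implied constants are absolute. -/

import Mathlib

/-!
The off-diagonal entries of `n(-x₁) b_θ n(x₂)`, with `θ = φ₂ - φ₁`, are `-sin(θ/2)` and
`(x₂ - x₁) cos(θ/2) + (x₁x₂ + 1) sin(θ/2)`; closeness to the diagonal torus makes both `O(δ)`.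
So `sin(θ/2) = O(δ)`, whence `cos(θ/2) = ±1 + O(δ)` and `b_θ = ±1 + O(δ)`, giving `b₂ = b₁ b_θ = ±b₁ + O(δ)`;
and since `|cos(θ/2)| ≥ 1/2`, the second entry forces `x₂ - x₁ = O(δ)`.
-/

noncomputable section

def Nc (z : ℂ) : Matrix (Fin 2) (Fin 2) ℂ := !![1, z; 0, 1]

/-- The rotation `b_θ` viewed in SL(2,ℂ). -/
def bC (θ : ℝ) : Matrix (Fin 2) (Fin 2) ℂ :=
  !![(Real.cos (θ/2) : ℂ), (Real.sin (θ/2) : ℂ);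
     (-Real.sin (θ/2) : ℝ), (Real.cos (θ/2) : ℂ)]

theorem Matrix.norm_mul_apply_le {m 𝕜 : Type*} [Fintype m] [SeminormedRing 𝕜]
    {A B : Matrix m m 𝕜} {a b : ℝ} (hA : ∀ i j, ‖A i j‖ ≤ a) (hB : ∀ i j, ‖B i j‖ ≤ b)
    (i j : m) : ‖(A * B) i j‖ ≤ Fintype.card m * (a * b) := by
  calc ‖(A * B) i j‖ ≤ ∑ k, ‖A i k * B k j‖ := by rw [Matrix.mul_apply]; exact norm_sum_le _ _
    _ ≤ ∑ _k : m, a * b := Finset.sum_le_sum fun k _ =>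
        (norm_mul_le _ _).trans <|
          mul_le_mul (hA i k) (hB k j) (norm_nonneg _) ((norm_nonneg _).trans (hA i k))
    _ = Fintype.card m * (a * b) := by simp

theorem bC_add (φ ψ : ℝ) : bC (φ + ψ) = bC φ * bC ψ := by
  ext i j
  fin_cases i <;> fin_cases j <;>
    simp [bC, Matrix.mul_apply, add_div, Real.cos_add, Real.sin_add] <;> ring

theorem bC_zero : bC 0 = 1 := by
  ext i j
  fin_cases i <;> fin_cases j <;> simp [bC]

theorem bC_inv (φ : ℝ) : (bC φ)⁻¹ = bC (-φ) :=
  Matrix.inv_eq_right_inv (by rw [← bC_add, add_neg_cancel, bC_zero])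

theorem bC_inv_mul_bC (φ₁ φ₂ : ℝ) : (bC φ₁)⁻¹ * bC φ₂ = bC (φ₂ - φ₁) := by
  rw [bC_inv, ← bC_add, neg_add_eq_sub]

theorem norm_bC_apply_le_one (φ : ℝ) (i j : Fin 2) : ‖bC φ i j‖ ≤ 1 := by
  fin_cases i <;> fin_cases j <;>
    simp [bC, -Complex.ofReal_cos, -Complex.ofReal_sin, Complex.norm_real,
      Real.abs_cos_le_one, Real.abs_sin_le_one]

theorem norm_bC_mul_apply_le {φ δ : ℝ} {B : Matrix (Fin 2) (Fin 2) ℂ}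
    (hB : ∀ i j, ‖B i j‖ ≤ δ) (i j : Fin 2) : ‖(bC φ * B) i j‖ ≤ 2 * δ := by
  simpa using Matrix.norm_mul_apply_le (norm_bC_apply_le_one φ) hB i j

theorem Nc_neg_mul_bC_mul_Nc (x₁ x₂ θ : ℝ) :
    Nc (-(x₁ : ℂ)) * bC θ * Nc (x₂ : ℂ) =
      !![((Real.cos (θ/2) + x₁ * Real.sin (θ/2) : ℝ) : ℂ),
         (((x₂ - x₁) * Real.cos (θ/2) + (x₁ * x₂ + 1) * Real.sin (θ/2) : ℝ) : ℂ);
         ((-Real.sin (θ/2) : ℝ) : ℂ),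
         ((Real.cos (θ/2) - x₂ * Real.sin (θ/2) : ℝ) : ℂ)] := by
  ext i j
  fin_cases i <;> fin_cases j <;> simp [Nc, bC, Matrix.mul_apply] <;> ring

theorem norm_one_sub_bC_apply_le {θ δ : ℝ} (hc : |1 - Real.cos (θ/2)| ≤ δ)
    (hs : |Real.sin (θ/2)| ≤ δ) (i j : Fin 2) : ‖(1 - bC θ) i j‖ ≤ δ := by
  fin_cases i <;> fin_cases j <;>
    simpa [bC, -Complex.ofReal_cos, -Complex.ofReal_sin, Complex.norm_real, Matrix.one_fin_two,
      ← Complex.ofReal_one, ← Complex.ofReal_sub]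

theorem norm_one_add_bC_apply_le {θ δ : ℝ} (hc : |1 + Real.cos (θ/2)| ≤ δ)
    (hs : |Real.sin (θ/2)| ≤ δ) (i j : Fin 2) : ‖(1 + bC θ) i j‖ ≤ δ := by
  fin_cases i <;> fin_cases j <;>
    simpa [bC, -Complex.ofReal_cos, -Complex.ofReal_sin, Complex.norm_real, Matrix.one_fin_two,
      ← Complex.ofReal_one, ← Complex.ofReal_add]

theorem abs_one_sub_le_or_abs_one_add_le {c s δ : ℝ} (h : s ^ 2 + c ^ 2 = 1) (hs : |s| ≤ δ) :
    |1 - c| ≤ δ ∨ |1 + c| ≤ δ := by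
  obtain ⟨hc₁, hc₂⟩ := abs_le_of_sq_le_sq' (by nlinarith : c ^ 2 ≤ 1 ^ 2) zero_le_one
  rw [abs_of_nonneg (sub_nonneg.2 hc₂), abs_of_nonneg (by linarith : 0 ≤ 1 + c)]
  by_contra! hne
  -- `(1 - c)(1 + c) = s²`
  nlinarith [sq_abs s, abs_nonneg s]

theorem one_half_le_abs_of_sq_add_sq_eq_one {c s : ℝ} (h : s ^ 2 + c ^ 2 = 1)
    (hs : |s| ≤ 1 / 2) : 1 / 2 ≤ |c| := by
  nlinarith [sq_abs c, sq_abs s, abs_nonneg c, abs_nonneg s]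

theorem abs_sub_le_of_abs_add_le {x₁ x₂ c s δ : ℝ} (hx₁ : |x₁| ≤ 2) (hx₂ : |x₂| ≤ 2)
    (hc : 1 / 2 ≤ |c|) (hs : |s| ≤ δ) (h : |(x₂ - x₁) * c + (x₁ * x₂ + 1) * s| ≤ δ) :
    |x₁ - x₂| ≤ 12 * δ := by
  have hprod : |x₁ * x₂ + 1| ≤ 5 := by
    calc |x₁ * x₂ + 1| ≤ |x₁| * |x₂| + 1 := by simpa [abs_mul] using abs_add_le (x₁ * x₂) 1
      _ ≤ 5 := by nlinarith [abs_nonneg x₁, abs_nonneg x₂]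
  have hxc : |x₂ - x₁| * |c| ≤ 6 * δ := by
    calc |x₂ - x₁| * |c| = |((x₂ - x₁) * c + (x₁ * x₂ + 1) * s) - (x₁ * x₂ + 1) * s| := by
          rw [add_sub_cancel_right, abs_mul]
      _ ≤ δ + 5 * δ := by
          refine (abs_sub _ _).trans (add_le_add h ?_)
          rw [abs_mul]
          exact mul_le_mul hprod hs (abs_nonneg s) (by norm_num)
      _ = 6 * δ := by ring
  rw [abs_sub_comm]
  nlinarith [abs_nonneg (x₂ - x₁)]

/-- If `n(−x₁)·b₁⁻¹·b₂·n(x₂)` is within `δ` of the torus `M·A = {diag(w, w⁻¹)}`, then the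
rotations `b₁, b₂` agree up to sign within `O(δ)` and `|x₁ − x₂| = O(δ)`. -/
theorem stmt_16 :
    ∃ D > 0, ∃ C > 0, ∀ δ φ₁ φ₂ x₁ x₂ : ℝ, 0 < δ → δ < D →
      x₁ ∈ Set.Icc (-2 : ℝ) 2 → x₂ ∈ Set.Icc (-2 : ℝ) 2 →
      (∃ w : ℂ, w ≠ 0 ∧ ∀ i j : Fin 2, ‖
        ((Nc (-(x₁ : ℂ)) * (bC φ₁)⁻¹ * bC φ₂ * Nc (x₂ : ℂ) - !![w, 0; 0, w⁻¹]) i j)‖ ≤ δ) →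
      ((∀ i j : Fin 2, ‖(bC φ₁ - bC φ₂) i j‖ ≤ C * δ) ∨
       (∀ i j : Fin 2, ‖(bC φ₁ + bC φ₂) i j‖ ≤ C * δ)) ∧
      |x₁ - x₂| ≤ C * δ := by
  refine ⟨1 / 2, by norm_num, 12, by norm_num, ?_⟩
  rintro δ φ₁ φ₂ x₁ x₂ hδ₀ hδ hx₁ hx₂ ⟨w, -, hw⟩
  have hφ₂ : bC φ₂ = bC φ₁ * bC (φ₂ - φ₁) := by rw [← bC_add, add_sub_cancel]
  rw [mul_assoc (Nc _), bC_inv_mul_bC, Nc_neg_mul_bC_mul_Nc] at hw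
  set c := Real.cos ((φ₂ - φ₁) / 2)
  set s := Real.sin ((φ₂ - φ₁) / 2)
  have hs : |s| ≤ δ := by simpa [Complex.norm_real] using hw 1 0
  have hoff : ‖(((x₂ - x₁) * c + (x₁ * x₂ + 1) * s : ℝ) : ℂ)‖ ≤ δ := by simpa using hw 0 1
  rw [Complex.norm_real, Real.norm_eq_abs] at hoff
  have hpyth : s ^ 2 + c ^ 2 = 1 := Real.sin_sq_add_cos_sq _
  refine ⟨?_, abs_sub_le_of_abs_add_le (abs_le.2 hx₁) (abs_le.2 hx₂)
    (one_half_le_abs_of_sq_add_sq_eq_one hpyth (hs.trans hδ.le)) hs hoff⟩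
  rcases abs_one_sub_le_or_abs_one_add_le hpyth hs with hc | hc
  · refine Or.inl fun i j => ?_
    rw [hφ₂, ← mul_one_sub]
    exact (norm_bC_mul_apply_le (norm_one_sub_bC_apply_le hc hs) i j).trans (by linarith)
  · refine Or.inr fun i j => ?_
    rw [hφ₂, ← mul_one_add]
    exact (norm_bC_mul_apply_le (norm_one_add_bC_apply_le hc hs) i j).trans (by linarith)
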